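/- Let N be a positive integer, P_i, P_o ∈ (0,1), μ(r,k) = C(k,r) P_o^r (1−P_o)^(k−r), ν(m,n) = C(n,m) P_i^m (1−P_i)^(n−m), and p_{kj} = Σ_{r = max(0, k−j)}^{min(k, N−j)} μ(r,k) ν(j+r−k, N−k). If π = (π_0,…,π_N) is a probability vector satisfying Σ_{k=0}^N π_k p_{kj} = π_j for all 0 ≤ j ≤ N, then π is the Binomial(N, η) distribution with η = P_i/(P_i+P_o); that is, π_j = C(N,j) η^j (1−η)^(N−j) for every j. -/

import Mathlib

open Finset

/-!
The binomial law is stationary because users move independently: a user who is inside with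
probability `η` is inside one step later with probability `η (1 - P_o) + (1 - η) P_i = η`.
Algebraically, splitting the `N` users into those who stay, enter, leave and stay out
regroups the sum over the previous state into a product of two binomial expansions.

Uniqueness holds because all transition probabilities are positive. If `d` is stationary with
`∑ d = 0`, then `|d|` is stationary too (rows sum to `1`, so the triangle inequalities are
equalities), hence `|d| - d` and `|d| + d` are nonnegative stationary vectors; a positive
column forces one of them to vanish, so `d` has constant sign and therefore `d = 0`.
-/

section Stationary

variable {ι : Type*} {s : Finset ι} {P : ι → ι → ℝ} {d e : ι → ℝ}

def IsStationaryVector (s : Finset ι) (P : ι → ι → ℝ) (d : ι → ℝ) : Prop :=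
  ∀ j ∈ s, ∑ k ∈ s, d k * P k j = d j

lemma IsStationaryVector.neg (hd : IsStationaryVector s P d) : IsStationaryVector s P (-d) :=
  fun j hj => by
    simp only [Pi.neg_apply, neg_mul, sum_neg_distrib, hd j hj]

lemma IsStationaryVector.sub (hd : IsStationaryVector s P d) (he : IsStationaryVector s P e) :
    IsStationaryVector s P (d - e) := fun j hj => by
  simp only [Pi.sub_apply, sub_mul, sum_sub_distrib, hd j hj, he j hj]

lemma IsStationaryVector.abs (hP : ∀ k ∈ s, ∀ j ∈ s, 0 ≤ P k j)
    (hrow : ∀ k ∈ s, ∑ j ∈ s, P k j = 1)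
    (hd : IsStationaryVector s P d) : IsStationaryVector s P (fun k => |d k|) := by
  have hle : ∀ j ∈ s, |d j| ≤ ∑ k ∈ s, |d k| * P k j := fun j hj => calc
    |d j| = |∑ k ∈ s, d k * P k j| := by rw [hd j hj]
    _ ≤ ∑ k ∈ s, |d k * P k j| := abs_sum_le_sum_abs _ _
    _ = ∑ k ∈ s, |d k| * P k j :=
      sum_congr rfl fun k hk => by rw [abs_mul, abs_of_nonneg (hP k hk j hj)]
  -- summing over `j` turns the triangle inequalities into an equality, since rows sum to `1`
  have htotal : ∑ j ∈ s, |d j| = ∑ j ∈ s, ∑ k ∈ s, |d k| * P k j := by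
    rw [sum_comm]
    exact sum_congr rfl fun k hk => by rw [← mul_sum, hrow k hk, mul_one]
  exact fun j hj => ((sum_eq_sum_iff_of_le hle).1 htotal j hj).symm

lemma IsStationaryVector.nonneg_of_apply_nonneg (hP : ∀ k ∈ s, ∀ j ∈ s, 0 ≤ P k j)
    (hrow : ∀ k ∈ s, ∑ j ∈ s, P k j = 1) {j₀ : ι} (hj₀ : j₀ ∈ s) (hcol : ∀ k ∈ s, 0 < P k j₀)
    (hd : IsStationaryVector s P d) (h : 0 ≤ d j₀) : ∀ k ∈ s, 0 ≤ d k := by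
  have hsum : ∑ k ∈ s, (|d k| - d k) * P k j₀ = 0 :=
    ((hd.abs hP hrow).sub hd j₀ hj₀).trans (sub_eq_zero.2 (abs_of_nonneg h))
  have hterms := (sum_eq_zero_iff_of_nonneg fun k hk =>
    mul_nonneg (sub_nonneg.2 (le_abs_self (d k))) (hcol k hk).le).1 hsum
  intro k hk
  rw [← sub_eq_zero.1 ((mul_eq_zero.1 (hterms k hk)).resolve_right (hcol k hk).ne')]
  exact abs_nonneg _

lemma IsStationaryVector.eq_zero_of_sum_eq_zero (hP : ∀ k ∈ s, ∀ j ∈ s, 0 ≤ P k j)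
    (hrow : ∀ k ∈ s, ∑ j ∈ s, P k j = 1) {j₀ : ι} (hj₀ : j₀ ∈ s) (hcol : ∀ k ∈ s, 0 < P k j₀)
    (hd : IsStationaryVector s P d) (hsum : ∑ k ∈ s, d k = 0) : ∀ k ∈ s, d k = 0 := by
  rcases le_total 0 (d j₀) with h | h
  · exact (sum_eq_zero_iff_of_nonneg (hd.nonneg_of_apply_nonneg hP hrow hj₀ hcol h)).1 hsum
  · have hneg := hd.neg.nonneg_of_apply_nonneg hP hrow hj₀ hcol (neg_nonneg.2 h)
    have hsum' : ∑ k ∈ s, (-d) k = 0 := by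
      simp only [Pi.neg_apply, sum_neg_distrib, hsum, neg_zero]
    exact fun k hk => neg_eq_zero.1 ((sum_eq_zero_iff_of_nonneg hneg).1 hsum' k hk)

lemma IsStationaryVector.eqOn_of_sum_eq (hP : ∀ k ∈ s, ∀ j ∈ s, 0 ≤ P k j)
    (hrow : ∀ k ∈ s, ∑ j ∈ s, P k j = 1) {j₀ : ι} (hj₀ : j₀ ∈ s) (hcol : ∀ k ∈ s, 0 < P k j₀)
    (hd : IsStationaryVector s P d) (he : IsStationaryVector s P e)
    (hsum : ∑ k ∈ s, d k = ∑ k ∈ s, e k) :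
    Set.EqOn d e s := fun k hk =>
  sub_eq_zero.1 ((hd.sub he).eq_zero_of_sum_eq_zero hP hrow hj₀ hcol
    (by simp only [Pi.sub_apply, sum_sub_distrib, hsum, sub_self]) k hk)

end Stationary

def binomialWeight (n : ℕ) (q : ℝ) (m : ℕ) : ℝ := n.choose m * q ^ m * (1 - q) ^ (n - m)

lemma sum_binomialWeight (n : ℕ) (q : ℝ) : ∑ m ∈ range (n + 1), binomialWeight n q m = 1 := by
  have := (add_pow q (1 - q) n).symm
  rw [add_sub_cancel, one_pow] at this
  rw [← this]
  exact sum_congr rfl fun m _ => by simp only [binomialWeight]; ring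

lemma binomialWeight_pos {n m : ℕ} {q : ℝ} (hq : q ∈ Set.Ioo 0 1) (hm : m ≤ n) :
    0 < binomialWeight n q m := by
  have := hq.1; have := sub_pos.2 hq.2
  have : (0 : ℝ) < n.choose m := by exact_mod_cast Nat.choose_pos hm
  unfold binomialWeight; positivity

lemma cast_choose_mul_choose_mul_choose (s c r d : ℕ) :
    ((s + c + r + d).choose (s + r) * (s + r).choose r * (c + d).choose c : ℝ) =
      (s + c + r + d).choose (s + c) * (s + c).choose s * (r + d).choose r := by
  rw [Nat.cast_choose ℝ (by omega : s + r ≤ s + c + r + d),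
    Nat.cast_choose ℝ (by omega : r ≤ s + r), Nat.cast_choose ℝ (by omega : c ≤ c + d),
    Nat.cast_choose ℝ (by omega : s + c ≤ s + c + r + d),
    Nat.cast_choose ℝ (by omega : s ≤ s + c), Nat.cast_choose ℝ (by omega : r ≤ r + d)]
  simp only [show s + c + r + d - (s + r) = c + d by omega,
    show s + c + r + d - (s + c) = r + d by omega, Nat.add_sub_cancel, Nat.add_sub_cancel_left]
  field_simp

-- `r` users leave the cell and `j + r - k` enter it.
def cellTransition (N : ℕ) (Pin Pout : ℝ) (k j : ℕ) : ℝ :=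
  ∑ r ∈ Icc (k - j) (min k (N - j)),
    binomialWeight k Pout r * binomialWeight (N - k) Pin (j + r - k)

lemma sum_range_sum_Icc_eq_sum_leave_enter {N k : ℕ} (hk : k ≤ N) (f : ℕ → ℕ → ℝ) :
    ∑ j ∈ range (N + 1), ∑ r ∈ Icc (k - j) (min k (N - j)), f r (j + r - k) =
      ∑ r ∈ range (k + 1), ∑ m ∈ range (N - k + 1), f r m := by
  rw [sum_sigma', ← sum_product']
  refine sum_nbij' (fun x => (x.2, x.1 + x.2 - k)) (fun y => ⟨y.2 + k - y.1, y.1⟩)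
    ?_ ?_ ?_ ?_ ?_ <;>
    rintro ⟨a, b⟩ h <;>
    simp only [mem_sigma, mem_product, mem_range, mem_Icc, le_inf_iff, Prod.mk.injEq,
      Sigma.mk.inj_iff, heq_eq_eq, true_and, and_true] at h ⊢ <;>
    omega

lemma sum_range_sum_Icc_eq_sum_stay_leave {N j : ℕ} (hj : j ≤ N) (g : ℕ → ℕ → ℝ) :
    ∑ k ∈ range (N + 1), ∑ r ∈ Icc (k - j) (min k (N - j)), g k r =
      ∑ s ∈ range (j + 1), ∑ r ∈ range (N - j + 1), g (s + r) r := by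
  rw [sum_sigma', ← sum_product']
  refine sum_nbij' (fun x => (x.1 - x.2, x.2)) (fun y => ⟨y.1 + y.2, y.2⟩) ?_ ?_ ?_ ?_
    fun x hx => by
      simp only [mem_sigma, mem_Icc, le_inf_iff] at hx
      rw [Nat.sub_add_cancel hx.2.2.1]
  all_goals
    rintro ⟨a, b⟩ h
    simp only [mem_sigma, mem_product, mem_range, mem_Icc, le_inf_iff, Prod.mk.injEq,
      Sigma.mk.inj_iff, heq_eq_eq, and_true] at h ⊢
    omega

lemma sum_cellTransition {N k : ℕ} (hk : k ≤ N) (Pin Pout : ℝ) :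
    ∑ j ∈ range (N + 1), cellTransition N Pin Pout k j = 1 := by
  unfold cellTransition
  rw [sum_range_sum_Icc_eq_sum_leave_enter hk
    (fun r m => binomialWeight k Pout r * binomialWeight (N - k) Pin m)]
  simp only [← mul_sum, sum_binomialWeight, mul_one]

lemma cellTransition_pos {N k j : ℕ} (hk : k ≤ N) (hj : j ≤ N) {Pin Pout : ℝ}
    (hPin : Pin ∈ Set.Ioo 0 1) (hPout : Pout ∈ Set.Ioo 0 1) :
    0 < cellTransition N Pin Pout k j :=
  sum_pos (fun r hr => by
      rw [mem_Icc, le_inf_iff] at hr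
      exact mul_pos (binomialWeight_pos hPout hr.2.1) (binomialWeight_pos hPin (by omega)))
    (nonempty_Icc.2 (by omega))

lemma binomialWeight_mul_binomialWeight_mul_binomialWeight {N j s r : ℕ} (hs : s ≤ j)
    (hr : j + r ≤ N) (η Pin Pout : ℝ) :
    binomialWeight N η (s + r) *
        (binomialWeight (s + r) Pout r * binomialWeight (N - (s + r)) Pin (j - s)) =
      N.choose j * (j.choose s * (η * (1 - Pout)) ^ s * ((1 - η) * Pin) ^ (j - s)) *
        ((N - j).choose r * (η * Pout) ^ r * ((1 - η) * (1 - Pin)) ^ (N - j - r)) := by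
  obtain ⟨c, rfl⟩ := Nat.exists_eq_add_of_le hs
  obtain ⟨d, rfl⟩ : ∃ d, N = s + c + r + d := ⟨N - (s + c + r), by omega⟩
  simp only [binomialWeight, show s + c + r + d - (s + r) = c + d by omega,
    show s + c + r + d - (s + c) = r + d by omega, Nat.add_sub_cancel, Nat.add_sub_cancel_left,
    mul_pow]
  linear_combination (η ^ s * η ^ r * (1 - η) ^ c * (1 - η) ^ d * Pout ^ r * (1 - Pout) ^ s *
    Pin ^ c * (1 - Pin) ^ d) * cast_choose_mul_choose_mul_choose s c r d

lemma isStationaryVector_binomialWeight (N : ℕ) {Pin Pout : ℝ} (h : Pin + Pout ≠ 0) :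
    IsStationaryVector (range (N + 1)) (cellTransition N Pin Pout)
      (binomialWeight N (Pin / (Pin + Pout))) := by
  intro j hj
  set η := Pin / (Pin + Pout)
  -- `η` is the stationary probability of a single user's two-state in/out chain
  have hin : η * (1 - Pout) + (1 - η) * Pin = η := by simp only [η]; field_simp; ring
  have hout : η * Pout + (1 - η) * (1 - Pin) = 1 - η := by simp only [η]; field_simp; ring
  have hjN : j ≤ N := mem_range_succ_iff.1 hj
  calc ∑ k ∈ range (N + 1), binomialWeight N η k * cellTransition N Pin Pout k j
      = ∑ s ∈ range (j + 1), ∑ r ∈ range (N - j + 1), binomialWeight N η (s + r) *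
          (binomialWeight (s + r) Pout r * binomialWeight (N - (s + r)) Pin (j - s)) := by
        simp only [cellTransition, mul_sum]
        rw [sum_range_sum_Icc_eq_sum_stay_leave hjN]
        simp only [Nat.add_sub_add_right]
    _ = N.choose j * (η * (1 - Pout) + (1 - η) * Pin) ^ j *
          (η * Pout + (1 - η) * (1 - Pin)) ^ (N - j) := by
        rw [add_pow, add_pow, mul_assoc, sum_mul_sum, mul_sum]
        simp only [mul_sum]
        refine sum_congr rfl fun s hs => sum_congr rfl fun r hr => ?_
        rw [binomialWeight_mul_binomialWeight_mul_binomialWeight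
          (mem_range_succ_iff.1 hs) (by have := mem_range_succ_iff.1 hr; omega)]
        ring
    _ = binomialWeight N η j := by rw [hin, hout, binomialWeight]

theorem stationary_is_binomial_general
    (N : ℕ) (Pin Pout : ℝ)
    (hPin : Pin ∈ Set.Ioo (0 : ℝ) 1) (hPout : Pout ∈ Set.Ioo (0 : ℝ) 1)
    (μ ν : ℕ → ℕ → ℝ) (p : ℕ → ℕ → ℝ) (π : ℕ → ℝ) (η : ℝ)
    (hμ : ∀ r k, μ r k = (Nat.choose k r : ℝ) * Pout ^ r * (1 - Pout) ^ (k - r))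
    (hν : ∀ m n, ν m n = (Nat.choose n m : ℝ) * Pin ^ m * (1 - Pin) ^ (n - m))
    (hp : ∀ k j, p k j =
      ∑ r ∈ Finset.Icc (k - j) (min k (N - j)), μ r k * ν (j + r - k) (N - k))
    (hπsum : ∑ j ∈ Finset.range (N + 1), π j = 1)
    (hstat : ∀ j ≤ N, ∑ k ∈ Finset.range (N + 1), π k * p k j = π j)
    (hη : η = Pin / (Pin + Pout)) :
    ∀ j ≤ N, π j = (Nat.choose N j : ℝ) * η ^ j * (1 - η) ^ (N - j) := by
  have hcell : p = cellTransition N Pin Pout := by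
    ext k j
    simp only [hp, hμ, hν, cellTransition, binomialWeight]
  subst hcell hη
  have hpos : ∀ k ∈ range (N + 1), ∀ j ∈ range (N + 1), 0 < cellTransition N Pin Pout k j :=
    fun k hk j hj => cellTransition_pos (mem_range_succ_iff.1 hk)
      (mem_range_succ_iff.1 hj) hPin hPout
  have hπ : IsStationaryVector (range (N + 1)) (cellTransition N Pin Pout) π :=
    fun j hj => hstat j (mem_range_succ_iff.1 hj)
  have hb := isStationaryVector_binomialWeight N (add_pos hPin.1 hPout.1).ne'
  intro j hj
  exact hπ.eqOn_of_sum_eq (fun k hk j hj => (hpos k hk j hj).le)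
    (fun k hk => sum_cellTransition (mem_range_succ_iff.1 hk) Pin Pout)
    (mem_range.2 N.succ_pos) (fun k hk => hpos k hk 0 (mem_range.2 N.succ_pos)) hb
    (hπsum.trans (sum_binomialWeight N _).symm) (mem_range_succ_iff.2 hj)

/-- Theorem 1 (with uniqueness): any stationary distribution of the Markov chain of
the number of users in a small cell is the Binomial(N, P_i/(P_i+P_o)) distribution. -/
theorem stationary_is_binomial
    (N : ℕ) (hN : 0 < N) (Pin Pout : ℝ)
    (hPin : Pin ∈ Set.Ioo (0 : ℝ) 1) (hPout : Pout ∈ Set.Ioo (0 : ℝ) 1)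
    (μ ν : ℕ → ℕ → ℝ) (p : ℕ → ℕ → ℝ) (π : ℕ → ℝ) (η : ℝ)
    (hμ : ∀ r k, μ r k = (Nat.choose k r : ℝ) * Pout ^ r * (1 - Pout) ^ (k - r))
    (hν : ∀ m n, ν m n = (Nat.choose n m : ℝ) * Pin ^ m * (1 - Pin) ^ (n - m))
    (hp : ∀ k j, p k j =
      ∑ r ∈ Finset.Icc (k - j) (min k (N - j)), μ r k * ν (j + r - k) (N - k))
    (hπnonneg : ∀ j, 0 ≤ π j)
    (hπsum : ∑ j ∈ Finset.range (N + 1), π j = 1)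
    (hstat : ∀ j ≤ N, ∑ k ∈ Finset.range (N + 1), π k * p k j = π j)
    (hη : η = Pin / (Pin + Pout)) :
    ∀ j ≤ N, π j = (Nat.choose N j : ℝ) * η ^ j * (1 - η) ^ (N - j) :=
  stationary_is_binomial_general N Pin Pout hPin hPout μ ν p π η hμ hν hp hπsum hstat hη
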